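/- Let D = {D_0,D_1,D_2,D_3} be a symmetric difference family of type H in a finite abelian group G of order v. Then D satisfies condition (d2) if and only if D satisfies both (d3) and (d4). In particular, if (d2) holds with witness sets E_0, E_1, then D_0·D_2 + D_2·D_0 + D_1·D_3 + D_3·D_1 = (Σ|D_i| − v + 1)·G in ℤ[G]. -/

import Mathlib

open Finset

noncomputable section

variable {G : Type*}

/-- The element of the group ring `ℤ[G]` associated to a finite subset `D ⊆ G`. -/
def grp [AddCommGroup G] [DecidableEq G] (D : Finset G) : AddMonoidAlgebra ℤ G :=
  ∑ x ∈ D, AddMonoidAlgebra.single x 1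

/-- `D^{(-1)} = {-x : x ∈ D}`. -/
def negSet [AddCommGroup G] [DecidableEq G] (D : Finset G) : Finset G :=
  D.image (fun x => -x)

/-- A subset is symmetric if `D = -D`. -/
def IsSymmetric [AddCommGroup G] [DecidableEq G] (D : Finset G) : Prop :=
  negSet D = D

/-- `G* = G \ {0}` as a finset. -/
def Gstar (G : Type*) [AddCommGroup G] [Fintype G] [DecidableEq G] : Finset G :=
  Finset.univ \ {0}

/-- A difference family of type `H`: four blocks with `λ = Σ|D_i| - |G|`. -/
def IsTypeH [AddCommGroup G] [Fintype G] [DecidableEq G] (D : Fin 4 → Finset G) : Prop :=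
  ∑ i, grp (D i) * grp (negSet (D i)) =
    ((∑ i, ((D i).card : ℤ)) - (Fintype.card G : ℤ)) • grp (Finset.univ : Finset G)
      + (Fintype.card G : ℤ) • AddMonoidAlgebra.single (0 : G) (1 : ℤ)

/-- A difference family of type `H_4^*`: four blocks with `λ = Σ|B_i| - (|G|+1)`. -/
def IsTypeH4star [AddCommGroup G] [Fintype G] [DecidableEq G] (B : Fin 4 → Finset G) : Prop :=
  ∑ i, grp (B i) * grp (negSet (B i)) =
    ((∑ i, ((B i).card : ℤ)) - ((Fintype.card G : ℤ) + 1)) • grp (Finset.univ : Finset G)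
      + ((Fintype.card G : ℤ) + 1) • AddMonoidAlgebra.single (0 : G) (1 : ℤ)

/-- A difference family of type `H_2^*`: two blocks with `λ = Σ|S_i| - (|G|+1)/2`. -/
def IsTypeH2star [AddCommGroup G] [Fintype G] [DecidableEq G] (S : Fin 2 → Finset G) : Prop :=
  ∑ i, grp (S i) * grp (negSet (S i)) =
    ((∑ i, ((S i).card : ℤ)) - ((Fintype.card G : ℤ) + 1) / 2) • grp (Finset.univ : Finset G)
      + (((Fintype.card G : ℤ) + 1) / 2) • AddMonoidAlgebra.single (0 : G) (1 : ℤ)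

/-- Condition (d3). -/
def CondD3 [AddCommGroup G] [Fintype G] [DecidableEq G] (D : Fin 4 → Finset G) : Prop :=
  grp (D 0) * grp (negSet (D 2)) + grp (D 2) * grp (negSet (D 0))
    + grp (D 1) * grp (negSet (D 3)) + grp (D 3) * grp (negSet (D 1)) =
    ((∑ i, ((D i).card : ℤ)) - (Fintype.card G : ℤ) + 1) • grp (Finset.univ : Finset G)

/-- Condition (c1). -/
def CondC1 [AddCommGroup G] [Fintype G] [DecidableEq G] (S : Fin 4 → Finset G) : Prop :=
  grp (S 0) * grp (negSet (S 2)) + grp (S 2) * grp (negSet (S 0))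
    + grp (S 1) * grp (negSet (S 3)) + grp (S 3) * grp (negSet (S 1)) =
    ((∑ i, ((S i).card : ℤ)) - (Fintype.card G : ℤ)) • grp (Finset.univ : Finset G)

/-- Condition (d2). -/
def CondD2 [AddCommGroup G] [Fintype G] [DecidableEq G] (D : Fin 4 → Finset G) : Prop :=
  ∃ E₀ E₁ : Finset G, E₀ ⊆ Gstar G ∧ E₁ ⊆ Gstar G ∧
    grp (D 0) + grp (D 1) - grp (D 2) - grp (D 3) = grp E₀ - grp (Gstar G \ E₀) ∧
    grp (D 0) + grp (D 3) - grp (D 1) - grp (D 2) = grp E₁ - grp (Gstar G \ E₁) ∧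
    IsTypeH4star ![E₀, E₁, Gstar G \ E₀, Gstar G \ E₁]

/-- A building family: eight symmetric, pairwise disjoint subsets partitioning `G*`,
satisfying (a3) and (a4). -/
def IsBuildingFamily [AddCommGroup G] [Fintype G] [DecidableEq G] (A : Fin 8 → Finset G) : Prop :=
  (∀ i, IsSymmetric (A i)) ∧
  (∀ i j, i ≠ j → Disjoint (A i) (A j)) ∧
  (Finset.univ.biUnion A = Gstar G) ∧
  IsTypeH4star ![A 0 ∪ A 1 ∪ A 6 ∪ A 7, A 2 ∪ A 3 ∪ A 4 ∪ A 5,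
    A 0 ∪ A 3 ∪ A 5 ∪ A 6, A 1 ∪ A 2 ∪ A 4 ∪ A 7] ∧
  (∑ i, grp (A i) * grp (A i)) - (∑ i, grp (A i) * grp (A (i + 4))) =
    ((Fintype.card G : ℤ) - 1) • AddMonoidAlgebra.single (0 : G) (1 : ℤ)
      + ((grp (A 0) + grp (A 1) + grp (A 2) + grp (A 3))
        - (grp (A 4) + grp (A 5) + grp (A 6) + grp (A 7)))

end
/-- Condition (d4). -/
def CondD4 {G : Type*} [AddCommGroup G] [Fintype G] [DecidableEq G]
    (D : Fin 4 → Finset G) : Prop :=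
  (∀ x : G, x ≠ 0 → (∑ i, grp (D i)).coeff x = 1 ∨ (∑ i, grp (D i)).coeff x = 3) ∧
  Even ((∑ i, grp (D i)).coeff (0 : G)) ∧
  ¬ (∃! p : Fin 4,
      (grp (D ((![((0 : Fin 4), (1 : Fin 4)), (2, 3), (0, 3), (1, 2)]) p).1)
        + grp (D ((![((0 : Fin 4), (1 : Fin 4)), (2, 3), (0, 3), (1, 2)]) p).2)).coeff (0 : G) = 2)

/-!
Write `X = D₀ + D₁ - D₂ - D₃` and `Y = D₀ + D₃ - D₁ - D₂`. A set `E ⊆ G*` with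
`X = E - (G* \ E)` exists iff `X` vanishes at `0` and is `±1` on `G*`; then `E` is where `X = 1`,
symmetric because `X` is. As the `Dᵢ` have 0/1 coefficients, these sign conditions on `X` and `Y`
are pointwise equivalent to (d4). Moreover `2(E² + (G* \ E)²) = X² + (G - 1)²` and
`X² + Y² = 2 Σ Dᵢ² - 4(D₀D₂ + D₁D₃)`, so by the type `H` identity the `H₄*` condition is twice
(d3), and `ℤ[G]` is torsion-free.
-/

open AddMonoidAlgebra

section GroupRing

variable {G : Type*} [AddCommGroup G]

lemma two_zsmul_injective : Function.Injective fun F : AddMonoidAlgebra ℤ G => (2 : ℤ) • F :=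
  fun _ _ h => (IsRegular.of_ne_zero two_ne_zero).isSMulRegular h

lemma eq_iff_eq_of_two_zsmul_sub_eq {a b c d : AddMonoidAlgebra ℤ G}
    (h : (2 : ℤ) • (a - b) = (2 : ℤ) • (d - c)) : a = b ↔ c = d := by
  rw [← sub_eq_zero, two_zsmul_injective h, sub_eq_zero, eq_comm]

variable [DecidableEq G]

lemma coeff_grp (D : Finset G) (x : G) : (grp D).coeff x = if x ∈ D then 1 else 0 := by
  simp [grp, Finsupp.single_apply, eq_comm]

lemma coeff_grp_eq_zero_or_one (D : Finset G) (x : G) :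
    (grp D).coeff x = 0 ∨ (grp D).coeff x = 1 := by
  rw [coeff_grp]; split_ifs <;> simp

lemma grp_sdiff {S E : Finset G} (h : E ⊆ S) : grp (S \ E) = grp S - grp E := by
  rw [eq_sub_iff_add_eq, grp, grp, grp, sum_sdiff h]

lemma mem_negSet {D : Finset G} {x : G} : x ∈ negSet D ↔ -x ∈ D := by
  simp only [negSet, mem_image, neg_eq_iff_eq_neg, exists_eq_right]

lemma IsSymmetric.neg_mem_iff {D : Finset G} (h : IsSymmetric D) {x : G} : -x ∈ D ↔ x ∈ D := by
  rw [← mem_negSet, h]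

lemma isSymmetric_of_neg_mem {D : Finset G} (h : ∀ x ∈ D, -x ∈ D) : IsSymmetric D :=
  Finset.ext fun x => mem_negSet.trans ⟨fun hx => neg_neg x ▸ h _ hx, h x⟩

lemma IsSymmetric.sdiff {S E : Finset G} (hS : IsSymmetric S) (hE : IsSymmetric E) :
    IsSymmetric (S \ E) :=
  isSymmetric_of_neg_mem fun x hx => by
    simp only [mem_sdiff, hS.neg_mem_iff, hE.neg_mem_iff] at hx ⊢
    exact hx

lemma IsSymmetric.coeff_grp_neg {D : Finset G} (h : IsSymmetric D) (x : G) :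
    (grp D).coeff (-x) = (grp D).coeff x := by
  simp only [coeff_grp, h.neg_mem_iff]

lemma coeff_neg_grp_add_grp_sub_grp_sub_grp {A B C D : Finset G} (hA : IsSymmetric A)
    (hB : IsSymmetric B) (hC : IsSymmetric C) (hD : IsSymmetric D) (x : G) :
    (grp A + grp B - grp C - grp D).coeff (-x) = (grp A + grp B - grp C - grp D).coeff x := by
  simp only [coeff_add, coeff_sub, Finsupp.add_apply, Finsupp.sub_apply, hA.coeff_grp_neg,
    hB.coeff_grp_neg, hC.coeff_grp_neg, hD.coeff_grp_neg]

end GroupRing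

section Gstar

variable {G : Type*} [AddCommGroup G] [Fintype G] [DecidableEq G]

lemma mem_gstar {x : G} : x ∈ Gstar G ↔ x ≠ 0 := by
  simp [Gstar]

lemma isSymmetric_gstar : IsSymmetric (Gstar G) :=
  isSymmetric_of_neg_mem fun x hx => by simpa [mem_gstar] using hx

lemma grp_gstar : grp (Gstar G) = grp (univ : Finset G) - 1 := by
  rw [Gstar, grp_sdiff (subset_univ _), sub_right_inj, grp, sum_singleton, one_def]

lemma card_gstar_sdiff {E : Finset G} (hE : E ⊆ Gstar G) :
    (#(Gstar G \ E) : ℤ) = Fintype.card G - 1 - #E := by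
  rw [card_sdiff_of_subset hE, Nat.cast_sub (card_le_card hE), Gstar,
    card_sdiff_of_subset (subset_univ _), card_singleton, card_univ,
    Nat.cast_sub Fintype.card_pos, Nat.cast_one]

lemma grp_mul_grp_univ (D : Finset G) :
    grp D * grp (univ : Finset G) = (#D : ℤ) • grp (univ : Finset G) := by
  have single_mul : ∀ a : G, single a (1 : ℤ) * grp univ = grp univ := fun a => by
    rw [grp, mul_sum]
    simp only [single_mul_single, one_mul]
    exact Fintype.sum_equiv (Equiv.addLeft a) _ _ fun _ => rfl
  rw [grp, sum_mul]
  simp only [single_mul, sum_const, natCast_zsmul]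

lemma coeff_grp_sub_grp_gstar_sdiff {E : Finset G} (hE : E ⊆ Gstar G) (x : G) :
    (grp E - grp (Gstar G \ E)).coeff x = if x = 0 then 0 else if x ∈ E then 1 else -1 := by
  have hE0 : (0 : G) ∉ E := fun h => mem_gstar.1 (hE h) rfl
  simp only [coeff_sub, Finsupp.sub_apply, coeff_grp, mem_sdiff, mem_gstar]
  by_cases hx : x = 0
  · subst hx; simp [hE0]
  · by_cases hxE : x ∈ E <;> simp [hx, hxE]

lemma exists_eq_grp_sub_grp_gstar_sdiff_iff (F : AddMonoidAlgebra ℤ G) :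
    (∃ E ⊆ Gstar G, F = grp E - grp (Gstar G \ E)) ↔
      F.coeff 0 = 0 ∧ ∀ x ≠ 0, F.coeff x = 1 ∨ F.coeff x = -1 := by
  constructor
  · rintro ⟨E, hE, rfl⟩
    refine ⟨by rw [coeff_grp_sub_grp_gstar_sdiff hE, if_pos rfl], fun x hx => ?_⟩
    rw [coeff_grp_sub_grp_gstar_sdiff hE, if_neg hx]
    split_ifs <;> simp
  · rintro ⟨h0, hpm⟩
    have hE : (Gstar G).filter (F.coeff · = 1) ⊆ Gstar G := filter_subset _ _
    refine ⟨_, hE, AddMonoidAlgebra.ext <| Finsupp.ext fun x => ?_⟩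
    rw [coeff_grp_sub_grp_gstar_sdiff hE]
    by_cases hx : x = 0
    · simp [hx, h0]
    · rcases hpm x hx with h | h <;> simp [hx, h, mem_gstar]

lemma isSymmetric_of_coeff_neg {E : Finset G} (hE : E ⊆ Gstar G)
    (h : ∀ x, (grp E - grp (Gstar G \ E)).coeff (-x) = (grp E - grp (Gstar G \ E)).coeff x) :
    IsSymmetric E := by
  refine isSymmetric_of_neg_mem fun x hx => ?_
  have hx0 : x ≠ 0 := mem_gstar.1 (hE hx)
  have := h x
  rw [coeff_grp_sub_grp_gstar_sdiff hE, coeff_grp_sub_grp_gstar_sdiff hE] at this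
  by_contra hnx
  simp [hx0, hx, hnx] at this

end Gstar

section Family

variable {G : Type*} [AddCommGroup G] [Fintype G] [DecidableEq G]

lemma isTypeH4star_iff_condD3 {D : Fin 4 → Finset G} (hsym : ∀ i, IsSymmetric (D i))
    (hH : IsTypeH D) {E₀ E₁ : Finset G} (hE₀ : E₀ ⊆ Gstar G) (hE₁ : E₁ ⊆ Gstar G)
    (hX : grp (D 0) + grp (D 1) - grp (D 2) - grp (D 3) = grp E₀ - grp (Gstar G \ E₀))
    (hY : grp (D 0) + grp (D 3) - grp (D 1) - grp (D 2) = grp E₁ - grp (Gstar G \ E₁)) :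
    IsTypeH4star ![E₀, E₁, Gstar G \ E₀, Gstar G \ E₁] ↔ CondD3 D := by
  have hs₀ : IsSymmetric E₀ := isSymmetric_of_coeff_neg hE₀ fun x => by
    rw [← hX]; exact coeff_neg_grp_add_grp_sub_grp_sub_grp (hsym 0) (hsym 1) (hsym 2) (hsym 3) x
  have hs₁ : IsSymmetric E₁ := isSymmetric_of_coeff_neg hE₁ fun x => by
    rw [← hY]; exact coeff_neg_grp_add_grp_sub_grp_sub_grp (hsym 0) (hsym 3) (hsym 1) (hsym 2) x
  have hUU := grp_mul_grp_univ (univ : Finset G)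
  unfold IsTypeH at hH
  unfold IsTypeH4star CondD3
  simp only [Fin.sum_univ_four, Matrix.cons_val_zero, Matrix.cons_val_one, Matrix.cons_val_two,
    Matrix.cons_val_three, Matrix.head_cons, Matrix.tail_cons] at hH ⊢
  rw [hs₀, hs₁, isSymmetric_gstar.sdiff hs₀, isSymmetric_gstar.sdiff hs₁, hsym 0, hsym 1,
    hsym 2, hsym 3, card_gstar_sdiff hE₀, card_gstar_sdiff hE₁, grp_sdiff hE₀, grp_sdiff hE₁,
    grp_gstar, ← one_def, card_univ] at *
  refine eq_iff_eq_of_two_zsmul_sub_eq ?_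
  simp only [zsmul_eq_mul] at *
  push_cast at *
  linear_combination 2 * hH + 2 * hUU
    - (grp (D 0) + grp (D 1) - grp (D 2) - grp (D 3) + 2 * grp E₀ - (grp univ - 1)) * hX
    - (grp (D 0) + grp (D 3) - grp (D 1) - grp (D 2) + 2 * grp E₁ - (grp univ - 1)) * hY

/-- Both signed sums vanish iff `a 0 = a 2` and `a 1 = a 3`, i.e. iff all four pair sums agree. -/
lemma signed_sums_eq_zero_iff (a : Fin 4 → ℤ) (ha : ∀ i, a i = 0 ∨ a i = 1) :
    (a 0 + a 1 - a 2 - a 3 = 0 ∧ a 0 + a 3 - a 1 - a 2 = 0) ↔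
      Even (∑ i, a i) ∧
        ¬ ∃! p : Fin 4, a (![((0 : Fin 4), (1 : Fin 4)), (2, 3), (0, 3), (1, 2)] p).1
          + a (![((0 : Fin 4), (1 : Fin 4)), (2, 3), (0, 3), (1, 2)] p).2 = 2 := by
  obtain ⟨b, rfl⟩ : ∃ b : Fin 4 → Bool, a = fun i => if b i then 1 else 0 :=
    ⟨fun i => a i = 1, funext fun i => by rcases ha i with h | h <;> simp [h]⟩
  revert b
  unfold ExistsUnique
  decide

lemma signed_sums_eq_pm_one_iff (a : Fin 4 → ℤ) (ha : ∀ i, a i = 0 ∨ a i = 1) :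
    ((a 0 + a 1 - a 2 - a 3 = 1 ∨ a 0 + a 1 - a 2 - a 3 = -1) ∧
        (a 0 + a 3 - a 1 - a 2 = 1 ∨ a 0 + a 3 - a 1 - a 2 = -1)) ↔
      (∑ i, a i = 1 ∨ ∑ i, a i = 3) := by
  rw [Fin.sum_univ_four]
  have := ha 0; have := ha 1; have := ha 2; have := ha 3
  omega

lemma exists_signed_decompositions_iff_condD4 (D : Fin 4 → Finset G) :
    ((∃ E ⊆ Gstar G, grp (D 0) + grp (D 1) - grp (D 2) - grp (D 3) = grp E - grp (Gstar G \ E)) ∧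
      ∃ E ⊆ Gstar G, grp (D 0) + grp (D 3) - grp (D 1) - grp (D 2) = grp E - grp (Gstar G \ E))
      ↔ CondD4 D := by
  have h01 (x : G) (i : Fin 4) := coeff_grp_eq_zero_or_one (D i) x
  have hzero := signed_sums_eq_zero_iff _ (h01 0)
  have hpm (x : G) := signed_sums_eq_pm_one_iff _ (h01 x)
  simp only [exists_eq_grp_sub_grp_gstar_sdiff_iff, CondD4, coeff_add, coeff_sub, coeff_sum,
    Finsupp.add_apply, Finsupp.sub_apply, Finsupp.finsetSum_apply] at hzero hpm ⊢
  constructor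
  · rintro ⟨⟨hX₀, hX⟩, hY₀, hY⟩
    exact ⟨fun x hx => (hpm x).1 ⟨hX x hx, hY x hx⟩, hzero.1 ⟨hX₀, hY₀⟩⟩
  · rintro ⟨hodd, hzero'⟩
    obtain ⟨hX₀, hY₀⟩ := hzero.2 hzero'
    exact ⟨⟨hX₀, fun x hx => ((hpm x).2 (hodd x hx)).1⟩, hY₀, fun x hx => ((hpm x).2 (hodd x hx)).2⟩

end Family

/-- for a symmetric type-`H` family, (d2) ↔ (d3) ∧ (d4); and (d2) implies
the displayed group-ring identity. -/
theorem d2_iff_d3_and_d4 {G : Type*} [AddCommGroup G] [Fintype G] [DecidableEq G]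
    (D : Fin 4 → Finset G) (hsym : ∀ i, IsSymmetric (D i)) (hH : IsTypeH D) :
    (CondD2 D ↔ (CondD3 D ∧ CondD4 D)) ∧
      (CondD2 D →
        grp (D 0) * grp (D 2) + grp (D 2) * grp (D 0)
          + grp (D 1) * grp (D 3) + grp (D 3) * grp (D 1) =
          ((∑ i, ((D i).card : ℤ)) - (Fintype.card G : ℤ) + 1) •
            grp (Finset.univ : Finset G)) := by
  have hd2 : CondD2 D ↔ CondD3 D ∧ CondD4 D := by
    rw [← exists_signed_decompositions_iff_condD4]
    constructor
    · rintro ⟨E₀, E₁, hE₀, hE₁, hX, hY, h4⟩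
      exact ⟨(isTypeH4star_iff_condD3 hsym hH hE₀ hE₁ hX hY).1 h4, ⟨E₀, hE₀, hX⟩, E₁, hE₁, hY⟩
    · rintro ⟨hd3, ⟨E₀, hE₀, hX⟩, E₁, hE₁, hY⟩
      exact ⟨E₀, E₁, hE₀, hE₁, hX, hY, (isTypeH4star_iff_condD3 hsym hH hE₀ hE₁ hX hY).2 hd3⟩
  refine ⟨hd2, fun h => ?_⟩
  have hd3 := (hd2.1 h).1
  rwa [CondD3, hsym 0, hsym 1, hsym 2, hsym 3] at hd3
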